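/- The Hadamard product of two positive semi-definite real symmetric matrices is positive semi-definite (Schur product theorem). -/

import Mathlib

open Matrix

theorem stmt_4 (n : ℕ) (M N : Matrix (Fin n) (Fin n) ℝ)
    (hM : M.PosSemidef) (hN : N.PosSemidef) :
    (M.hadamard N).PosSemidef :=
  hM.hadamard hN
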